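/- arXiv:1902.06259 — 5 statements merged into one kernel-verified Lean document; each statement's English description precedes it below -/
import Mathlib

section
/- Let f_{α,β}(z) = 1 + ((β-α)/π) i log((1 - e^{2πi(1-α)/(β-α)} z)/(1-z)) with real α < 1 < β. Then for every z in the open unit disk, α < Re(f_{α,β}(z)) < β. -/
/-! With `t = π(1 - α)/(β - α) ∈ (0, π)` the function is `1 - ((β - α)/π) arg w` for
`w = (1 - e^{2it} z)/(1 - z)`, so the claim is `t - π < arg w < t`. This holds because
`Im (e^{-it} w) = -sin t (1 - |z|²)/|1 - z|² < 0`: rotating `w` by `-t` lands in the lower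
half-plane. -/

open Complex Metric

lemma re_one_add_ofReal_mul_I_mul_log (c : ℝ) (w : ℂ) :
    (1 + c * I * log w).re = 1 - c * w.arg := by
  simp [log_im, sub_eq_add_neg]

lemma im_exp_neg_mul_I_mul_div_one_sub (t : ℝ) (z : ℂ) :
    (exp (-(t * I)) * ((1 - exp (2 * t * I) * z) / (1 - z))).im
      = -Real.sin t * (1 - normSq z) / normSq (1 - z) := by
  have hrot : exp (-(t * I)) * ((1 - exp (2 * t * I) * z) / (1 - z))
      = (exp (-(t * I)) - exp (t * I) * z) / (1 - z) := by
    rw [mul_div_assoc', mul_sub, mul_one, ← mul_assoc, ← exp_add]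
    ring_nf
  rw [hrot, div_im, neg_mul, neg_div, ← sub_div, ← neg_div, ← neg_mul]
  congr 1
  simp only [exp_mul_I, ← ofReal_neg, ← ofReal_cos, ← ofReal_sin, normSq_apply, sub_re, sub_im,
    mul_re, mul_im, add_re, add_im, ofReal_re, ofReal_im, I_re, I_im, one_re, one_im,
    Real.cos_neg, Real.sin_neg]
  ring

lemma im_exp_neg_mul_I_mul_div_one_sub_neg {t : ℝ} (ht0 : 0 < t) (htπ : t < Real.pi) {z : ℂ}
    (hz : ‖z‖ < 1) :
    (exp (-(t * I)) * ((1 - exp (2 * t * I) * z) / (1 - z))).im < 0 := by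
  have hz1 : z ≠ 1 := by rintro rfl; simp at hz
  have hnormSq : normSq z < 1 := by rw [← Complex.sq_norm]; exact pow_lt_one₀ (norm_nonneg z) hz two_ne_zero
  rw [im_exp_neg_mul_I_mul_div_one_sub t z, neg_mul, neg_div, neg_neg_iff_pos]
  have hsin : 0 < Real.sin t := Real.sin_pos_of_pos_of_lt_pi ht0 htπ
  have hden : 0 < normSq (1 - z) := normSq_pos.mpr (sub_ne_zero.mpr hz1.symm)
  exact div_pos (mul_pos hsin (by linarith)) hden

lemma arg_mem_Ioo_of_im_exp_neg_mul_I_mul_neg {t : ℝ} (ht0 : 0 ≤ t) (htπ : t ≤ Real.pi) {w : ℂ}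
    (hw : (exp (-(t * I)) * w).im < 0) : t - Real.pi < w.arg ∧ w.arg < t := by
  set u := exp (-(t * I)) * w
  have hu0 : u ≠ 0 := fun h => by simp [h] at hw
  have hargu : -Real.pi < u.arg ∧ u.arg < 0 := ⟨neg_pi_lt_arg u, arg_neg_iff.mpr hw⟩
  have harg_exp : (exp (t * I)).arg = t := by
    rw [exp_mul_I]; exact arg_cos_add_sin_mul_I ⟨by linarith [Real.pi_pos], htπ⟩
  have hwu : w = exp (t * I) * u := by
    rw [← mul_assoc, ← exp_add, add_neg_cancel, exp_zero, one_mul]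
  have hargw : w.arg = t + u.arg := by
    rw [hwu, arg_mul (exp_ne_zero _) hu0 (by rw [harg_exp]; constructor <;> linarith), harg_exp]
  constructor <;> linarith

theorem stmt_2 (α β : ℝ) (hα : α < 1) (hβ : 1 < β) :
    ∀ z ∈ ball (0 : ℂ) 1,
      α < (1 + ((β - α) / Real.pi) * Complex.I *
        Complex.log ((1 - Complex.exp (2 * Real.pi * Complex.I * (1 - α) / (β - α)) * z) / (1 - z))).re ∧
      (1 + ((β - α) / Real.pi) * Complex.I *
        Complex.log ((1 - Complex.exp (2 * Real.pi * Complex.I * (1 - α) / (β - α)) * z) / (1 - z))).re < β := by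
  intro z hz
  rw [mem_ball, dist_zero_right] at hz
  have hba : 0 < β - α := by linarith
  set c := (β - α) / Real.pi
  have hc : 0 < c := div_pos hba Real.pi_pos
  set t := Real.pi * (1 - α) / (β - α)
  have hct : c * t = 1 - α := by simp only [c, t]; field_simp
  have hcπ : c * Real.pi = β - α := by simp only [c]; field_simp
  have ht0 : 0 < t := div_pos (mul_pos Real.pi_pos (by linarith)) hba
  have htπ : t < Real.pi := by
    rw [div_lt_iff₀ hba]; nlinarith [Real.pi_pos]
  have hexp : 2 * Real.pi * I * (1 - α) / (β - α) = 2 * (t : ℂ) * I := by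
    have : (β : ℂ) - α ≠ 0 := by exact_mod_cast hba.ne'
    simp only [t]; push_cast; field_simp
  have hc' : ((β : ℂ) - α) / Real.pi = (c : ℂ) := by simp only [c]; push_cast; rfl
  rw [hexp, hc', re_one_add_ofReal_mul_I_mul_log]
  obtain ⟨hlow, hupp⟩ := arg_mem_Ioo_of_im_exp_neg_mul_I_mul_neg ht0.le htπ.le
    (im_exp_neg_mul_I_mul_div_one_sub_neg ht0 htπ hz)
  constructor <;> linarith [mul_lt_mul_of_pos_left hlow hc, mul_lt_mul_of_pos_left hupp hc]
end

section
/- Let 0 ≤ α, δ < 1 < β and suppose f(z) = z + Σ_{n≥2} a_n z^n and g(z) = z + Σ_{n≥2} b_n z^n are holomorphic on the unit disk with α < Re(z f'(z)/g(z)) < β for all z in the punctured disk (with the limit value 1 at 0), and |b_n| ≤ (1/(n-1)!) Π_{k=2}^n [k - 2 + (2(β-δ)/π) sin(π(1-δ)/(β-δ))] for all n ≥ 2. Then for all n ≥ 2: |a_n| ≤ (1/n!) Π_{k=2}^n [k-2 + (2(β-δ)/π) sin(π(1-δ)/(β-δ))] + (2(β-α)/(nπ)) sin(π(1-α)/(β-α))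 · (1 + Σ_{j=1}^{n-2} (1/(n-j-1)!) Π_{k=2}^{n-j} [k-2 + (2(β-δ)/π) sin(π(1-δ)/(β-δ))]). -/
/-!
Let `p = z f' / g`, extended by `p 0 = 1`: it is holomorphic on the disc with values in the strip
`α < re w < β`. Its Taylor coefficients satisfy `‖c m‖ ≤ 2 (β - α) / π * sin (π (1 - α) / (β - α))`
for `m ≥ 1`. For `m = 1` this is the Schwarz lemma, after mapping the strip conformally onto the
disc with `1 ↦ 0` (first `w ↦ exp (iπ (w - α) / (β - α))` onto the upper half-plane, then a Möbius
map). For general `m`, averaging `p` over the rotations `z ↦ ε ^ j z` by the `m`-th roots of unity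
gives a function of `z ^ m` with Taylor coefficients `c (m k)`, still with values in the convex
strip, and the case `m = 1` applies to it. Comparing coefficients in `p g = z f'` gives
`n a n = ∑ k ≤ n, c k b (n - k)`, and the triangle inequality finishes the proof.
-/

open Complex Metric Finset FormalMultilinearSeries
open scoped ENNReal ComplexConjugate

theorem Metric.eball_one_eq_ball {X : Type*} [PseudoMetricSpace X] (x : X) :
    eball x 1 = ball x 1 := by
  simpa using Metric.eball_coe (x := x) (ε := 1)

def HasPowerSeriesOnUnitDisc (f : ℂ → ℂ) (a : ℕ → ℂ) : Prop :=
  ∀ z ∈ ball (0 : ℂ) 1, HasSum (fun n => a n * z ^ n) (f z)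

theorem DifferentiableOn.exists_hasPowerSeriesOnUnitDisc {f : ℂ → ℂ}
    (hf : DifferentiableOn ℂ f (ball 0 1)) : ∃ a, HasPowerSeriesOnUnitDisc f a :=
  ⟨fun n => iteratedDeriv n f 0 / n.factorial, fun z hz => by
    simpa [div_mul_eq_mul_div, mul_comm, mul_left_comm, div_eq_inv_mul] using
      Complex.hasSum_taylorSeries_on_ball hf hz⟩

namespace HasPowerSeriesOnUnitDisc

variable {f g : ℂ → ℂ} {a b : ℕ → ℂ}

theorem hasFPowerSeriesOnBall (hf : HasPowerSeriesOnUnitDisc f a) :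
    HasFPowerSeriesOnBall f (ofScalars ℂ a) 0 1 where
  r_le := by
    refine ENNReal.le_of_forall_nnreal_lt fun r hr => ?_
    have hr1 : (r : ℝ) < 1 := by exact_mod_cast hr
    have hsum := hf r (by simpa [abs_of_nonneg r.coe_nonneg] using hr1)
    refine (ofScalars ℂ a).le_radius_of_tendsto (l := 0) ?_
    simpa [norm_apply_eq_norm_coef, coeff_ofScalars, abs_of_nonneg r.coe_nonneg] using
      hsum.summable.tendsto_atTop_zero.norm
  r_pos := one_pos
  hasSum {z} hz := by
    simpa [apply_eq_pow_smul_coeff, coeff_ofScalars, mul_comm] using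
      hf z (by simpa [Metric.eball_one_eq_ball] using hz)

theorem congr (hf : HasPowerSeriesOnUnitDisc f a) (hfg : Set.EqOn f g (ball 0 1)) :
    HasPowerSeriesOnUnitDisc g a := fun z hz => hfg hz ▸ hf z hz

theorem differentiableOn (hf : HasPowerSeriesOnUnitDisc f a) :
    DifferentiableOn ℂ f (ball 0 1) := by
  simpa [Metric.eball_one_eq_ball] using hf.hasFPowerSeriesOnBall.differentiableOn

theorem coeff_zero (hf : HasPowerSeriesOnUnitDisc f a) : a 0 = f 0 := by
  simpa using (hasSum_single (f := fun n => a n * 0 ^ n) 0 fun n hn => by simp [hn]).unique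
    (hf 0 (mem_ball_self one_pos))

theorem deriv_zero (hf : HasPowerSeriesOnUnitDisc f a) : deriv f 0 = a 1 := by
  simp [hf.hasFPowerSeriesOnBall.hasFPowerSeriesAt.deriv, coeff_ofScalars]

theorem summable_norm (hf : HasPowerSeriesOnUnitDisc f a) {z : ℂ} (hz : z ∈ ball 0 1) :
    Summable fun n => ‖a n * z ^ n‖ := by
  have hr : ((‖z‖₊ : ℝ≥0∞)) < (ofScalars ℂ a).radius := by
    refine lt_of_lt_of_le ?_ hf.hasFPowerSeriesOnBall.r_le
    rw [ENNReal.coe_lt_one_iff, ← NNReal.coe_lt_one]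
    simpa using hz
  simpa [norm_apply_eq_norm_coef, coeff_ofScalars] using (ofScalars ℂ a).summable_norm_mul_pow hr

theorem unique {a' : ℕ → ℂ} (hf : HasPowerSeriesOnUnitDisc f a)
    (hf' : HasPowerSeriesOnUnitDisc f a') : a = a' :=
  ofScalars_series_injective ℂ ℂ <|
    hf.hasFPowerSeriesOnBall.hasFPowerSeriesAt.eq_formalMultilinearSeries
      hf'.hasFPowerSeriesOnBall.hasFPowerSeriesAt

theorem mul (hf : HasPowerSeriesOnUnitDisc f a) (hg : HasPowerSeriesOnUnitDisc g b) :
    HasPowerSeriesOnUnitDisc (f * g) fun n => ∑ k ∈ range (n + 1), a k * b (n - k) := by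
  intro z hz
  have hprod := hasSum_sum_range_mul_of_summable_norm (hf.summable_norm hz) (hg.summable_norm hz)
  rw [(hf z hz).tsum_eq, (hg z hz).tsum_eq] at hprod
  have hterm (n : ℕ) : (∑ k ∈ range (n + 1), a k * b (n - k)) * z ^ n =
      ∑ k ∈ range (n + 1), a k * z ^ k * (b (n - k) * z ^ (n - k)) := by
    rw [Finset.sum_mul]
    refine Finset.sum_congr rfl fun k hk => ?_
    rw [← pow_mul_pow_sub z (Nat.le_of_lt_succ (mem_range.mp hk))]
    ring
  simpa only [hterm, Pi.mul_apply] using hprod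

theorem mul_deriv (hf : HasPowerSeriesOnUnitDisc f a) :
    HasPowerSeriesOnUnitDisc (fun z => z * deriv f z) fun n => n * a n := by
  intro z hz
  have hz' : z ∈ eball 0 1 := by rwa [Metric.eball_one_eq_ball]
  have h := (hf.hasFPowerSeriesOnBall.fderiv.hasSum hz').mapL (ContinuousLinearMap.apply ℂ ℂ z)
  have hcoeff (n : ℕ) : (ofScalars ℂ a).derivSeries.coeff n z = z * ((n + 1) * a (n + 1)) := by
    rw [← mul_one z, ← smul_eq_mul, map_smul]
    simp [coeff_ofScalars]
  rw [← hasSum_nat_add_iff' 1]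
  simpa [apply_eq_pow_smul_coeff, hcoeff, fderiv_apply_one_eq_deriv, pow_succ, mul_comm,
    mul_left_comm, mul_assoc] using h

end HasPowerSeriesOnUnitDisc

theorem IsPrimitiveRoot.sum_pow_pow_eq_ite {R : Type*} [CommRing R] [IsDomain R] {ε : R}
    {m : ℕ} (hε : IsPrimitiveRoot ε m) (n : ℕ) :
    ∑ j ∈ range m, (ε ^ j) ^ n = if m ∣ n then (m : R) else 0 := by
  simp_rw [← pow_mul, mul_comm _ n, pow_mul]
  split_ifs with hmn
  · simp [(hε.pow_eq_one_iff_dvd n).mpr hmn]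
  · have hne : ε ^ n ≠ 1 := fun h => hmn ((hε.pow_eq_one_iff_dvd n).mp h)
    have hpow : (ε ^ n) ^ m = 1 := by rw [← pow_mul, mul_comm, pow_mul, hε.pow_eq_one, one_pow]
    have := geom_sum_mul (ε ^ n) m
    rw [hpow, sub_self] at this
    exact (mul_eq_zero.mp this).resolve_right (sub_ne_zero.mpr hne)

theorem IsPrimitiveRoot.pow_mul_mem_ball {ε : ℂ} {m : ℕ} (hε : IsPrimitiveRoot ε m) (hm : m ≠ 0)
    (j : ℕ) {z : ℂ} {r : ℝ} (hz : z ∈ ball 0 r) : ε ^ j * z ∈ ball 0 r := by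
  simpa [norm_mul, norm_pow, hε.norm'_eq_one hm] using hz

namespace HasPowerSeriesOnUnitDisc

variable {f : ℂ → ℂ} {a : ℕ → ℂ}

theorem hasSum_mean_rootsOfUnity (hf : HasPowerSeriesOnUnitDisc f a) {m : ℕ} (hm : m ≠ 0)
    {ε : ℂ} (hε : IsPrimitiveRoot ε m) {z : ℂ} (hz : z ∈ ball 0 1) :
    HasSum (fun k => a (m * k) * (z ^ m) ^ k) ((m : ℂ)⁻¹ * ∑ j ∈ range m, f (ε ^ j * z)) := by
  have hsum := hasSum_sum fun j (_ : j ∈ range m) => hf _ (hε.pow_mul_mem_ball hm j hz)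
  have hinner (n : ℕ) : ∑ j ∈ range m, a n * (ε ^ j * z) ^ n =
      if m ∣ n then m * (a n * z ^ n) else 0 := by
    simp_rw [mul_pow, ← mul_assoc, mul_comm (a n), mul_assoc, ← Finset.sum_mul,
      hε.sum_pow_pow_eq_ite n]
    split_ifs <;> ring
  simp_rw [hinner] at hsum
  rw [← (mul_right_injective₀ hm).hasSum_iff fun n hn => if_neg fun ⟨k, hk⟩ => hn ⟨k, hk.symm⟩]
    at hsum
  simpa [← pow_mul, ← mul_assoc, hm] using hsum.mul_left (m : ℂ)⁻¹

theorem exists_section_mapsTo (hf : HasPowerSeriesOnUnitDisc f a) {m : ℕ} (hm : m ≠ 0)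
    {S : Set ℂ} (hS : Convex ℝ S) (hfS : Set.MapsTo f (ball 0 1) S) :
    ∃ F, HasPowerSeriesOnUnitDisc F (fun k => a (m * k)) ∧ Set.MapsTo F (ball 0 1) S := by
  have hε := Complex.isPrimitiveRoot_exp m hm
  have hmean (w : ℂ) (hw : w ∈ ball 0 1) : ∃ s ∈ S, HasSum (fun k => a (m * k) * w ^ k) s := by
    obtain ⟨z, rfl⟩ := IsAlgClosed.exists_pow_nat_eq w (Nat.pos_of_ne_zero hm)
    have hz : z ∈ ball 0 1 := by
      simpa [norm_pow, pow_lt_one_iff_of_nonneg (norm_nonneg z) hm] using hw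
    refine ⟨_, ?_, hf.hasSum_mean_rootsOfUnity hm hε hz⟩
    have := hS.sum_mem (t := range m) (w := fun _ => (m : ℝ)⁻¹) (fun _ _ => by positivity)
      (by simp [hm]) fun j _ => hfS (hε.pow_mul_mem_ball hm j hz)
    simpa [Finset.mul_sum, Complex.real_smul] using this
  choose! s hsS hs using hmean
  exact ⟨s, hs, hsS⟩

end HasPowerSeriesOnUnitDisc

theorem norm_sub_div_sub_conj_lt_one {ζ u : ℂ} (hζ : 0 < ζ.im) (hu : 0 < u.im) :
    ‖(u - ζ) / (u - conj ζ)‖ < 1 := by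
  have hden : u - conj ζ ≠ 0 := fun h => by
    have := congrArg im h
    simp only [sub_im, conj_im, zero_im] at this
    linarith
  rw [norm_div, div_lt_one (norm_pos_iff.mpr hden), ← sq_lt_sq₀ (norm_nonneg _) (norm_nonneg _),
    ← normSq_eq_norm_sq, ← normSq_eq_norm_sq]
  simp only [normSq_apply, sub_re, sub_im, conj_re, conj_im]
  nlinarith [mul_pos hζ hu]

theorem hasDerivAt_sub_div_sub_conj {ζ : ℂ} (hζ : ζ.im ≠ 0) :
    HasDerivAt (fun u => (u - ζ) / (u - conj ζ)) (ζ - conj ζ)⁻¹ ζ := by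
  have hne : ζ - conj ζ ≠ 0 := by
    rw [sub_conj]
    simp [hζ, I_ne_zero]
  refine (((hasDerivAt_id' ζ).sub_const ζ).div ((hasDerivAt_id' ζ).sub_const (conj ζ)) hne
    ).congr_deriv ?_
  field_simp
  ring

theorem Complex.im_exp_mul_I_pos {w : ℂ} (h0 : 0 < w.re) (hπ : w.re < Real.pi) :
    0 < (exp (w * I)).im := by
  rw [exp_im]
  exact mul_pos (Real.exp_pos _)
    (Real.sin_pos_of_pos_of_lt_pi (by simpa using h0) (by simpa using hπ))

section StripToDisc

variable {α β x : ℝ} {w : ℂ}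

noncomputable def stripToHalfPlane (α β : ℝ) (w : ℂ) : ℂ :=
  exp (↑(Real.pi / (β - α)) * (w - α) * I)

theorem stripToHalfPlane_im_pos (hw : α < w.re ∧ w.re < β) : 0 < (stripToHalfPlane α β w).im := by
  have hβα : 0 < β - α := by linarith
  refine im_exp_mul_I_pos ?_ ?_ <;>
    simp only [mul_re, ofReal_re, ofReal_im, sub_re, sub_im, zero_mul, sub_zero]
  · exact mul_pos (div_pos Real.pi_pos hβα) (by linarith)
  · rw [div_mul_eq_mul_div, div_lt_iff₀ hβα]
    nlinarith [Real.pi_pos]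

theorem hasDerivAt_stripToHalfPlane (α β : ℝ) (w : ℂ) :
    HasDerivAt (stripToHalfPlane α β) (↑(Real.pi / (β - α)) * I * stripToHalfPlane α β w) w :=
  ((((hasDerivAt_id' w).sub_const (α : ℂ)).const_mul _).mul_const I).cexp.congr_deriv <| by
    rw [stripToHalfPlane]
    ring

theorem stripToHalfPlane_ofReal (α β x : ℝ) :
    stripToHalfPlane α β x = exp (↑(Real.pi * (x - α) / (β - α)) * I) := by
  rw [stripToHalfPlane]
  push_cast
  ring_nf

theorem stripToHalfPlane_ofReal_im (α β x : ℝ) :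
    (stripToHalfPlane α β x).im = Real.sin (Real.pi * (x - α) / (β - α)) := by
  rw [stripToHalfPlane_ofReal, exp_ofReal_mul_I_im]

theorem norm_stripToHalfPlane_ofReal (α β x : ℝ) : ‖stripToHalfPlane α β x‖ = 1 := by
  rw [stripToHalfPlane_ofReal, norm_exp_ofReal_mul_I]

theorem sin_pos_of_mem_strip (hx : α < x ∧ x < β) :
    0 < Real.sin (Real.pi * (x - α) / (β - α)) :=
  stripToHalfPlane_ofReal_im α β x ▸ stripToHalfPlane_im_pos (w := x) hx

noncomputable def stripToDisc (α β x : ℝ) (w : ℂ) : ℂ :=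
  (stripToHalfPlane α β w - stripToHalfPlane α β x) /
    (stripToHalfPlane α β w - conj (stripToHalfPlane α β x))

theorem stripToDisc_self (α β x : ℝ) : stripToDisc α β x x = 0 := by
  simp [stripToDisc]

theorem norm_stripToDisc_lt_one (hx : α < x ∧ x < β) (hw : α < w.re ∧ w.re < β) :
    ‖stripToDisc α β x w‖ < 1 :=
  norm_sub_div_sub_conj_lt_one (stripToHalfPlane_im_pos (w := x) hx) (stripToHalfPlane_im_pos hw)

theorem hasDerivAt_stripToDisc_self (hx : α < x ∧ x < β) :
    HasDerivAt (stripToDisc α β x)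
      ((stripToHalfPlane α β x - conj (stripToHalfPlane α β x))⁻¹ *
        (↑(Real.pi / (β - α)) * I * stripToHalfPlane α β x)) x :=
  (hasDerivAt_sub_div_sub_conj (stripToHalfPlane_im_pos (w := x) hx).ne').comp (x : ℂ)
    (hasDerivAt_stripToHalfPlane α β x)

theorem differentiableAt_stripToDisc (hx : α < x ∧ x < β) (hw : α < w.re ∧ w.re < β) :
    DifferentiableAt ℂ (stripToDisc α β x) w := by
  have hden : stripToHalfPlane α β w - conj (stripToHalfPlane α β x) ≠ 0 := fun h => by
    have := congrArg im h
    simp only [sub_im, conj_im, zero_im] at this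
    linarith [stripToHalfPlane_im_pos hw, stripToHalfPlane_im_pos (w := x) hx]
  have hd := (hasDerivAt_stripToHalfPlane α β w).differentiableAt
  exact (hd.sub_const _).div (hd.sub_const _) hden

theorem norm_deriv_stripToDisc_self (hx : α < x ∧ x < β) :
    ‖deriv (stripToDisc α β x) x‖ =
      Real.pi / (2 * (β - α) * Real.sin (Real.pi * (x - α) / (β - α))) := by
  have hβα : 0 < β - α := by linarith
  have hsin := sin_pos_of_mem_strip hx
  rw [(hasDerivAt_stripToDisc_self hx).deriv, sub_conj, stripToHalfPlane_ofReal_im, norm_mul,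
    norm_inv, norm_mul, norm_mul, norm_mul, norm_real, norm_real, norm_I,
    norm_stripToHalfPlane_ofReal, Real.norm_of_nonneg (by positivity),
    Real.norm_of_nonneg (by positivity)]
  field_simp

end StripToDisc

theorem norm_deriv_le_of_mapsTo_strip {α β x : ℝ} (hx : α < x ∧ x < β) {G : ℂ → ℂ}
    (hG : DifferentiableOn ℂ G (ball 0 1))
    (hGS : Set.MapsTo G (ball 0 1) {w | α < w.re ∧ w.re < β}) (hG0 : G 0 = x) :
    ‖deriv G 0‖ ≤ 2 * (β - α) / Real.pi * Real.sin (Real.pi * (x - α) / (β - α)) := by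
  have hβα : 0 < β - α := by linarith [hx.1, hx.2]
  have hsin := sin_pos_of_mem_strip hx
  have hd : DifferentiableOn ℂ (stripToDisc α β x ∘ G) (ball 0 1) := fun z hz =>
    ((differentiableAt_stripToDisc hx (hGS hz)).comp z
      (hG.differentiableAt (isOpen_ball.mem_nhds hz))).differentiableWithinAt
  have hmaps : Set.MapsTo (stripToDisc α β x ∘ G) (ball 0 1)
      (closedBall ((stripToDisc α β x ∘ G) 0) 1) := fun z hz => by
    simpa [hG0, stripToDisc_self] using (norm_stripToDisc_lt_one hx (hGS hz)).le
  have hschwarz := Complex.norm_deriv_le_div_of_mapsTo_ball hd hmaps one_pos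
  rw [div_one, deriv_comp (0 : ℂ) (by rw [hG0]; exact differentiableAt_stripToDisc hx (by simpa))
    (hG.differentiableAt (ball_mem_nhds 0 one_pos)), norm_mul, hG0,
    norm_deriv_stripToDisc_self hx] at hschwarz
  rw [div_mul_eq_mul_div, le_div_iff₀ Real.pi_pos]
  rw [div_mul_eq_mul_div, div_le_one (by positivity)] at hschwarz
  linarith

theorem HasPowerSeriesOnUnitDisc.norm_coeff_le_of_mapsTo_strip {f : ℂ → ℂ} {a : ℕ → ℂ}
    {α β x : ℝ} (hf : HasPowerSeriesOnUnitDisc f a) (hx : α < x ∧ x < β)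
    (hfS : Set.MapsTo f (ball 0 1) {w | α < w.re ∧ w.re < β}) (hf0 : f 0 = x) {m : ℕ}
    (hm : m ≠ 0) :
    ‖a m‖ ≤ 2 * (β - α) / Real.pi * Real.sin (Real.pi * (x - α) / (β - α)) := by
  obtain ⟨F, hF, hFS⟩ := hf.exists_section_mapsTo hm
    ((convex_halfSpace_re_gt α).inter (convex_halfSpace_re_lt β)) hfS
  have hF0 : F 0 = x := by rw [← hF.coeff_zero, mul_zero, hf.coeff_zero, hf0]
  simpa [hF.deriv_zero] using norm_deriv_le_of_mapsTo_strip hx hF.differentiableOn hFS hF0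

theorem exists_differentiableOn_mul_eq_mul_deriv {f g : ℂ → ℂ}
    (hf : DifferentiableOn ℂ f (ball 0 1)) (hg : DifferentiableOn ℂ g (ball 0 1))
    (hg0 : g 0 = 0) (hg'0 : deriv g 0 ≠ 0) (hgz : ∀ z ∈ ball (0 : ℂ) 1, z ≠ 0 → g z ≠ 0) :
    ∃ p : ℂ → ℂ, DifferentiableOn ℂ p (ball 0 1) ∧ p 0 = deriv f 0 / deriv g 0 ∧
      ∀ z ∈ ball (0 : ℂ) 1, p z * g z = z * deriv f z := by
  have hG : DifferentiableOn ℂ (dslope g 0) (ball 0 1) :=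
    (differentiableOn_dslope (ball_mem_nhds 0 one_pos)).mpr hg
  have hgG (z : ℂ) : g z = z * dslope g 0 z := by
    simpa [hg0] using (sub_smul_dslope g 0 z).symm
  have hGz (z : ℂ) (hz : z ∈ ball 0 1) : dslope g 0 z ≠ 0 := by
    rcases eq_or_ne z 0 with rfl | hz0
    · rwa [dslope_same]
    · exact right_ne_zero_of_mul (hgG z ▸ hgz z hz hz0)
  refine ⟨fun z => deriv f z / dslope g 0 z, (hf.deriv isOpen_ball).div hG hGz,
    by simp only [dslope_same], fun z hz => ?_⟩
  rw [hgG z]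
  field_simp [hGz z hz]

theorem norm_sum_range_mul_le {c b : ℕ → ℂ} {B : ℝ} {Q : ℕ → ℝ} {n : ℕ} (hn : 2 ≤ n)
    (hc0 : c 0 = 1) (hc : ∀ k, k ≠ 0 → ‖c k‖ ≤ B) (hb0 : b 0 = 0) (hb1 : b 1 = 1)
    (hb : ∀ k, 2 ≤ k → ‖b k‖ ≤ Q k) :
    ‖∑ k ∈ range (n + 1), c k * b (n - k)‖ ≤ Q n + B * (1 + ∑ j ∈ Icc 1 (n - 2), Q (n - j)) := by
  obtain ⟨m, rfl⟩ : ∃ m, n = m + 2 := ⟨n - 2, by omega⟩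
  have hB : 0 ≤ B := (norm_nonneg _).trans (hc 1 one_ne_zero)
  rw [range_eq_Ico, sum_eq_sum_Ico_succ_bot (by omega), sum_Ico_succ_top (by omega),
    sum_Ico_succ_top (by omega), Ico_add_one_right_eq_Icc]
  simp only [zero_add, Nat.sub_zero, Nat.sub_self, show m + 2 - (m + 1) = 1 by omega,
    Nat.add_sub_cancel, hc0, hb0, hb1, one_mul, mul_one, mul_zero, add_zero]
  calc _ ≤ ‖b (m + 2)‖ + (∑ k ∈ Icc 1 m, ‖c k‖ * ‖b (m + 2 - k)‖ + ‖c (m + 1)‖) := by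
        refine (norm_add_le _ _).trans (add_le_add le_rfl ((norm_add_le _ _).trans ?_))
        exact add_le_add ((norm_sum_le _ _).trans_eq (by simp only [norm_mul])) le_rfl
    _ ≤ Q (m + 2) + (∑ k ∈ Icc 1 m, B * Q (m + 2 - k) + B) := by
        gcongr with k hk
        · exact hb _ (by omega)
        · exact hc k (by rw [mem_Icc] at hk; omega)
        · exact hb _ (by rw [mem_Icc] at hk; omega)
        · exact hc _ (by omega)
    _ = _ := by rw [mul_add, mul_one, mul_sum]; ring

theorem HasPowerSeriesOnUnitDisc.exists_coeff_of_strip {f g : ℂ → ℂ} {a b : ℕ → ℂ}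
    {α β : ℝ} (hf : HasPowerSeriesOnUnitDisc f a) (ha1 : a 1 = 1)
    (hg : HasPowerSeriesOnUnitDisc g b) (hb0 : b 0 = 0) (hb1 : b 1 = 1)
    (hgz : ∀ z ∈ ball (0 : ℂ) 1, z ≠ 0 → g z ≠ 0) (h1 : α < 1 ∧ 1 < β)
    (hstrip : ∀ z ∈ ball (0 : ℂ) 1, z ≠ 0 →
      α < (z * deriv f z / g z).re ∧ (z * deriv f z / g z).re < β) :
    ∃ c : ℕ → ℂ, c 0 = 1 ∧
      (∀ k, k ≠ 0 → ‖c k‖ ≤ 2 * (β - α) / Real.pi * Real.sin (Real.pi * (1 - α) / (β - α))) ∧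
      ∀ n : ℕ, (n : ℂ) * a n = ∑ k ∈ range (n + 1), c k * b (n - k) := by
  obtain ⟨p, hpd, hp0, hpg⟩ := exists_differentiableOn_mul_eq_mul_deriv hf.differentiableOn
    hg.differentiableOn (by rw [← hg.coeff_zero, hb0]) (by simp [hg.deriv_zero, hb1]) hgz
  rw [hf.deriv_zero, hg.deriv_zero, ha1, hb1, div_one] at hp0
  have hpS : Set.MapsTo p (ball 0 1) {w | α < w.re ∧ w.re < β} := fun z hz => by
    rcases eq_or_ne z 0 with rfl | hz0
    · simpa [hp0] using h1
    · rw [Set.mem_ofPred_eq, eq_div_of_mul_eq (hgz z hz hz0) (hpg z hz)]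
      exact hstrip z hz hz0
  obtain ⟨c, hc⟩ := hpd.exists_hasPowerSeriesOnUnitDisc
  exact ⟨c, hc.coeff_zero.trans hp0,
    fun k hk => hc.norm_coeff_le_of_mapsTo_strip h1 hpS (by rw [hp0, ofReal_one]) hk,
    congrFun (hf.mul_deriv.unique ((hc.mul hg).congr hpg))⟩

theorem stmt_5_general (α β δ : ℝ) (hα : 0 ≤ α) (hα1 : α < 1) (hβ : 1 < β)
    (f g : ℂ → ℂ) (a b : ℕ → ℂ)
    (hfs : ∀ z ∈ ball (0 : ℂ) 1, HasSum (fun n : ℕ => a n * z ^ n) (f z))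
    (ha1 : a 1 = 1)
    (hgs : ∀ z ∈ ball (0 : ℂ) 1, HasSum (fun n : ℕ => b n * z ^ n) (g z))
    (hb0 : b 0 = 0) (hb1 : b 1 = 1)
    (hstrip : ∀ z ∈ ball (0 : ℂ) 1, z ≠ 0 →
      α < (z * deriv f z / g z).re ∧ (z * deriv f z / g z).re < β)
    (hbn : ∀ n : ℕ, 2 ≤ n → ‖b n‖ ≤
      (∏ k ∈ Finset.Icc 2 n,
        ((k : ℝ) - 2 + (2 * (β - δ) / Real.pi) * Real.sin (Real.pi * (1 - δ) / (β - δ)))) /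
        (Nat.factorial (n - 1))) :
    ∀ n : ℕ, 2 ≤ n → ‖a n‖ ≤
      (∏ k ∈ Finset.Icc 2 n,
        ((k : ℝ) - 2 + (2 * (β - δ) / Real.pi) * Real.sin (Real.pi * (1 - δ) / (β - δ)))) /
        (Nat.factorial n) +
      (2 * (β - α) / (n * Real.pi)) * Real.sin (Real.pi * (1 - α) / (β - α)) *
        (1 + ∑ j ∈ Finset.Icc 1 (n - 2),
          (∏ k ∈ Finset.Icc 2 (n - j),
            ((k : ℝ) - 2 + (2 * (β - δ) / Real.pi) * Real.sin (Real.pi * (1 - δ) / (β - δ)))) /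
            (Nat.factorial (n - j - 1))) := by
  intro n hn
  -- `g z = 0` would make the quotient the junk value `0`, whose real part is not above `α ≥ 0`
  have hgz (z : ℂ) (hz : z ∈ ball (0 : ℂ) 1) (hz0 : z ≠ 0) : g z ≠ 0 := fun h => by
    have := (hstrip z hz hz0).1
    simp only [h, div_zero, zero_re] at this
    linarith
  obtain ⟨c, hc0, hcB, hconv⟩ :=
    HasPowerSeriesOnUnitDisc.exists_coeff_of_strip hfs ha1 hgs hb0 hb1 hgz ⟨hα1, hβ⟩ hstrip
  have key := norm_sum_range_mul_le hn hc0 hcB hb0 hb1 hbn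
  rw [← hconv, norm_mul, norm_natCast, ← le_div_iff₀' (by positivity)] at key
  refine key.trans_eq ?_
  rw [← Nat.mul_factorial_pred (by omega : n ≠ 0)]
  push_cast
  ring

theorem stmt_5 (α β δ : ℝ) (hα : 0 ≤ α) (hα1 : α < 1) (hδ : 0 ≤ δ) (hδ1 : δ < 1) (hβ : 1 < β)
    (f g : ℂ → ℂ) (a b : ℕ → ℂ)
    (hfs : ∀ z ∈ ball (0 : ℂ) 1, HasSum (fun n : ℕ => a n * z ^ n) (f z))
    (ha0 : a 0 = 0) (ha1 : a 1 = 1)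
    (hgs : ∀ z ∈ ball (0 : ℂ) 1, HasSum (fun n : ℕ => b n * z ^ n) (g z))
    (hb0 : b 0 = 0) (hb1 : b 1 = 1)
    (hstrip : ∀ z ∈ ball (0 : ℂ) 1, z ≠ 0 →
      α < (z * deriv f z / g z).re ∧ (z * deriv f z / g z).re < β)
    (hbn : ∀ n : ℕ, 2 ≤ n → ‖b n‖ ≤
      (∏ k ∈ Finset.Icc 2 n,
        ((k : ℝ) - 2 + (2 * (β - δ) / Real.pi) * Real.sin (Real.pi * (1 - δ) / (β - δ)))) /
        (Nat.factorial (n - 1))) :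
    ∀ n : ℕ, 2 ≤ n → ‖a n‖ ≤
      (∏ k ∈ Finset.Icc 2 n,
        ((k : ℝ) - 2 + (2 * (β - δ) / Real.pi) * Real.sin (Real.pi * (1 - δ) / (β - δ)))) /
        (Nat.factorial n) +
      (2 * (β - α) / (n * Real.pi)) * Real.sin (Real.pi * (1 - α) / (β - α)) *
        (1 + ∑ j ∈ Finset.Icc 1 (n - 2),
          (∏ k ∈ Finset.Icc 2 (n - j),
            ((k : ℝ) - 2 + (2 * (β - δ) / Real.pi) * Real.sin (Real.pi * (1 - δ) / (β - δ)))) /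
            (Nat.factorial (n - j - 1))) :=
  stmt_5_general α β δ hα hα1 hβ f g a b hfs ha1 hgs hb0 hb1 hstrip hbn
end

section
/- Let α < 1 < β be real and let p be holomorphic on the open unit disk with p(0) = 1 and α < Re p(z) < β for all z. Then p is subordinate to f_{α,β}(z) = 1 + ((β-α)/π) i log((1 - e^{2πi(1-α)/(β-α)} z)/(1-z)), i.e., there is a holomorphic ω : 𝔻 → 𝔻 with ω(0)=0 and p = f_{α,β} ∘ ω. -/
/-!
With `θ = π (1 - α) / (β - α) ∈ (0, π)`, the map `f_{α,β}` factors as `A ∘ log ∘ M`, where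
`M z = (1 - e^{2iθ} z) / (1 - z)` maps the disk onto the half-plane of points closer to `1` than
to `e^{2iθ}`, `log` maps that half-plane onto the horizontal strip `θ - π < Im ζ < θ`, and
`A ζ = 1 + ((β - α) / π) i ζ` maps that strip onto `Ω_{α,β}`. Each factor is inverted explicitly,
so `ω = M⁻¹ ∘ exp ∘ A⁻¹ ∘ p` is holomorphic, maps the disk into itself, and vanishes at `0`
because `p 0 = 1`.
-/

open Complex Metric

-- The half-plane `θ - π < arg < θ` is bounded by the perpendicular bisector of `1` and `e^{2iθ}`.
theorem norm_exp_sub_one_lt_norm_exp_sub_exp {θ : ℝ} (hθ₀ : 0 < θ) (hθπ : θ < Real.pi) {z : ℂ}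
    (hz₁ : θ - Real.pi < z.im) (hz₂ : z.im < θ) :
    ‖exp z - 1‖ < ‖exp z - exp (2 * θ * I)‖ := by
  have hcos : Real.cos (z.im - 2 * θ) < Real.cos z.im := by
    have hsin : 0 < Real.sin θ * -Real.sin (z.im - θ) :=
      mul_pos (Real.sin_pos_of_pos_of_lt_pi hθ₀ hθπ)
        (neg_pos.2 (Real.sin_neg_of_neg_of_neg_pi_lt (by linarith) (by linarith)))
    have := Real.cos_sub_cos (z.im - 2 * θ) z.im
    rw [show (z.im - 2 * θ + z.im) / 2 = z.im - θ by ring,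
      show (z.im - 2 * θ - z.im) / 2 = -θ by ring, Real.sin_neg] at this
    linarith
  have hre : (exp z * (starRingEnd ℂ) (exp (2 * θ * I))).re
      = Real.exp z.re * Real.cos (z.im - 2 * θ) := by
    rw [← exp_conj, ← exp_add, exp_re]
    simp [sub_eq_add_neg]
  have hunit : normSq (exp (2 * θ * I)) = 1 := by
    rw [normSq_eq_norm_sq, show (2 : ℂ) * θ * I = ↑(2 * θ) * I by push_cast; ring,
      norm_exp_ofReal_mul_I, one_pow]
  rw [← sq_lt_sq₀ (norm_nonneg _) (norm_nonneg _), Complex.sq_norm, Complex.sq_norm, normSq_sub,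
    normSq_sub, hre, hunit, normSq_one, map_one, mul_one, exp_re]
  nlinarith [Real.exp_pos z.re]

theorem one_sub_mul_div_one_sub_at_sub_div_sub {K : Type*} [Field K] {a q : K} (ha : a ≠ 1)
    (hq : q ≠ a) : (1 - a * ((q - 1) / (q - a))) / (1 - (q - 1) / (q - a)) = q := by
  have hqa : q - a ≠ 0 := sub_ne_zero.2 hq
  have h1a : 1 - a ≠ 0 := sub_ne_zero.2 ha.symm
  have hnum : 1 - a * ((q - 1) / (q - a)) = q * (1 - a) / (q - a) := by field_simp; ring
  have hden : 1 - (q - 1) / (q - a) = (1 - a) / (q - a) := by field_simp; ring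
  rw [hnum, hden, div_div_div_cancel_right₀ hqa, mul_div_cancel_right₀ _ h1a]

noncomputable def stripMap (α β : ℝ) (z : ℂ) : ℂ :=
  1 + ((β - α) / Real.pi) * I * log ((1 - exp (2 * Real.pi * I * (1 - α) / (β - α)) * z) / (1 - z))

noncomputable def stripAngle (α β : ℝ) : ℝ := Real.pi * (1 - α) / (β - α)

-- `A⁻¹`, in the notation of the header.
noncomputable def stripLog (α β : ℝ) (w : ℂ) : ℂ := I * (1 - w) / ((β - α) / Real.pi)

noncomputable def stripMapInv (α β : ℝ) (w : ℂ) : ℂ :=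
  (exp (stripLog α β w) - 1) / (exp (stripLog α β w) - exp (2 * stripAngle α β * I))

section
variable {α β : ℝ}

theorem exp_two_stripAngle_mul_I :
    exp (2 * stripAngle α β * I) = exp (2 * Real.pi * I * (1 - α) / (β - α)) := by
  congr 1
  rw [stripAngle]
  push_cast
  ring

theorem stripAngle_pos (hα : α < 1) (hβ : 1 < β) : 0 < stripAngle α β :=
  div_pos (mul_pos Real.pi_pos (by linarith)) (by linarith)

theorem stripAngle_lt_pi (hα : α < 1) (hβ : 1 < β) : stripAngle α β < Real.pi := by
  rw [stripAngle, div_lt_iff₀ (by linarith)]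
  nlinarith [Real.pi_pos]

theorem stripLog_im (w : ℂ) : (stripLog α β w).im = Real.pi * (1 - w.re) / (β - α) := by
  rw [stripLog, show ((β : ℂ) - α) / Real.pi = ((β - α) / Real.pi : ℝ) by push_cast; rfl,
    div_ofReal_im]
  simp [div_div_eq_mul_div, mul_comm]

theorem stripLog_im_mem {w : ℂ} (hw : w ∈ re ⁻¹' Set.Ioo α β) :
    (stripLog α β w).im ∈ Set.Ioo (stripAngle α β - Real.pi) (stripAngle α β) := by
  obtain ⟨hαw, hwβ⟩ := hw
  have hβα : 0 < β - α := by linarith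
  have hπ := Real.pi_pos
  rw [stripLog_im, stripAngle]
  have hθπ : Real.pi * (1 - α) / (β - α) - Real.pi = Real.pi * (1 - β) / (β - α) := by
    field_simp; ring
  rw [hθπ, Set.mem_Ioo, div_lt_div_iff_of_pos_right hβα, div_lt_div_iff_of_pos_right hβα]
  constructor <;> nlinarith

theorem stripScale_ne_zero (hαβ : α < β) : ((β : ℂ) - α) / Real.pi ≠ 0 :=
  div_ne_zero (sub_ne_zero.2 (ofReal_injective.ne hαβ.ne')) (ofReal_ne_zero.2 Real.pi_ne_zero)

theorem stripLog_one : stripLog α β 1 = 0 := by simp [stripLog]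

theorem stripMapInv_one : stripMapInv α β 1 = 0 := by simp [stripMapInv, stripLog_one]

theorem norm_exp_stripLog_sub_one_lt (hα : α < 1) (hβ : 1 < β) {w : ℂ}
    (hw : w ∈ re ⁻¹' Set.Ioo α β) :
    ‖exp (stripLog α β w) - 1‖ < ‖exp (stripLog α β w) - exp (2 * stripAngle α β * I)‖ := by
  obtain ⟨h₁, h₂⟩ := stripLog_im_mem hw
  exact norm_exp_sub_one_lt_norm_exp_sub_exp (stripAngle_pos hα hβ) (stripAngle_lt_pi hα hβ) h₁ h₂

theorem exp_stripLog_sub_ne_zero (hα : α < 1) (hβ : 1 < β) {w : ℂ}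
    (hw : w ∈ re ⁻¹' Set.Ioo α β) :
    exp (stripLog α β w) - exp (2 * stripAngle α β * I) ≠ 0 :=
  norm_pos_iff.1 ((norm_nonneg _).trans_lt (norm_exp_stripLog_sub_one_lt hα hβ hw))

theorem norm_stripMapInv_lt_one (hα : α < 1) (hβ : 1 < β) {w : ℂ}
    (hw : w ∈ re ⁻¹' Set.Ioo α β) : ‖stripMapInv α β w‖ < 1 := by
  rw [stripMapInv, norm_div, div_lt_one (norm_pos_iff.2 (exp_stripLog_sub_ne_zero hα hβ hw))]
  exact norm_exp_stripLog_sub_one_lt hα hβ hw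

theorem analyticOn_stripMapInv (hα : α < 1) (hβ : 1 < β) :
    AnalyticOn ℂ (stripMapInv α β) (re ⁻¹' Set.Ioo α β) := by
  have hlog : AnalyticOn ℂ (fun w ↦ exp (stripLog α β w)) (re ⁻¹' Set.Ioo α β) :=
    ((analyticOn_const.mul (analyticOn_const.sub analyticOn_id)).div analyticOn_const
      fun _ _ ↦ stripScale_ne_zero (hα.trans hβ)).cexp
  exact (hlog.sub analyticOn_const).div (hlog.sub analyticOn_const)
    fun w hw ↦ exp_stripLog_sub_ne_zero hα hβ hw

theorem stripMap_stripMapInv (hα : α < 1) (hβ : 1 < β) {w : ℂ}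
    (hw : w ∈ re ⁻¹' Set.Ioo α β) : stripMap α β (stripMapInv α β w) = w := by
  obtain ⟨h₁, h₂⟩ := stripLog_im_mem hw
  have hθ := stripAngle_lt_pi hα hβ
  have hθ' := stripAngle_pos hα hβ
  have hlt := norm_exp_stripLog_sub_one_lt hα hβ hw
  have ha : exp (2 * stripAngle α β * I) ≠ 1 := fun h ↦ by rw [h] at hlt; exact lt_irrefl _ hlt
  rw [stripMap, ← exp_two_stripAngle_mul_I, stripMapInv,
    one_sub_mul_div_one_sub_at_sub_div_sub ha (sub_ne_zero.1 (exp_stripLog_sub_ne_zero hα hβ hw)),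
    log_exp (by linarith) (by linarith), stripLog]
  have hc : ((β : ℂ) - α) / Real.pi * (I * (1 - w) / ((β - α) / Real.pi)) = I * (1 - w) :=
    mul_div_cancel₀ _ (stripScale_ne_zero (hα.trans hβ))
  linear_combination I * hc + (1 - w) * I_sq

end

theorem stmt_11 (α β : ℝ) (hα : α < 1) (hβ : 1 < β) (p : ℂ → ℂ)
    (hp : AnalyticOn ℂ p (ball (0 : ℂ) 1)) (hp0 : p 0 = 1)
    (hstrip : ∀ z ∈ ball (0 : ℂ) 1, α < (p z).re ∧ (p z).re < β) :
    ∃ ω : ℂ → ℂ, AnalyticOn ℂ ω (ball (0 : ℂ) 1) ∧ ω 0 = 0 ∧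
      (∀ z ∈ ball (0 : ℂ) 1, ω z ∈ ball (0 : ℂ) 1) ∧
      (∀ z ∈ ball (0 : ℂ) 1, p z =
        1 + ((β - α) / Real.pi) * Complex.I *
          Complex.log ((1 - Complex.exp (2 * Real.pi * Complex.I * (1 - α) / (β - α)) * ω z)
            / (1 - ω z))) := by
  refine ⟨stripMapInv α β ∘ p, (analyticOn_stripMapInv hα hβ).comp hp hstrip, ?_, ?_, ?_⟩
  · simp [hp0, stripMapInv_one]
  · exact fun z hz ↦ mem_ball_zero_iff.2 (norm_stripMapInv_lt_one hα hβ (hstrip z hz))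
  · exact fun z hz ↦ (stripMap_stripMapInv hα hβ (hstrip z hz)).symm
end

section
/- Let α < 1 < β be real and let p be holomorphic on the open unit disk with p(0) = 1, Taylor expansion p(z) = 1 + Σ_{m≥1} c_m z^m, and α < Re p(z) < β for all z in the disk. Then |c_m| ≤ (2(β-α)/π) sin(π(1-α)/(β-α)) for every m ≥ 1. -/
/-!
Instead of subordination and Rogosinski's lemma, bound the Fourier coefficient directly. For
`0 < r < 1` let `u θ = Re p(r e^{iθ}) - α`. Then `0 ≤ u ≤ M := β - α`, the mean of `u` is
`a := 1 - α` (since `c 0 = 1`), and orthogonality of the characters `e^{ikθ}` against the power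
series gives `∫ u(θ) e^{-imθ} dθ = π c_m r^m` for `m ≥ 1`. After rotating the phase of this
coefficient it becomes `∫ u(θ) cos(mθ + φ) dθ`, and with `s = π a / M` the pointwise bound
`u cos t ≤ M (cos t - cos s)⁺ + (cos s) u` integrates, since `∫ (cos t - cos s)⁺ dt =
2 (sin s - s cos s)`, to `π ‖c_m‖ r^m ≤ 2 M sin s`. Let `r → 1`.
-/

open Complex Metric MeasureTheory Filter Set
open scoped Real ComplexConjugate Topology

theorem integral_exp_int_mul_I (k : ℤ) :
    ∫ θ in (0 : ℝ)..2 * π, exp (k * θ * I) = if k = 0 then ((2 * π : ℝ) : ℂ) else 0 := by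
  split_ifs with hk
  · simp [hk]
  have hkI : (k : ℂ) * I ≠ 0 := mul_ne_zero (by exact_mod_cast hk) I_ne_zero
  simp_rw [mul_right_comm _ _ I]
  rw [integral_exp_mul_complex hkI]
  have : (k : ℂ) * I * ((2 * π : ℝ) : ℂ) = k * (2 * π * I) := by push_cast; ring
  rw [this, exp_int_mul_two_pi_mul_I]
  simp

theorem summable_norm_mul_pow_of_summable {𝕜 : Type*} [NormedDivisionRing 𝕜] {c : ℕ → 𝕜}
    {z : 𝕜} (hz : Summable fun n => c n * z ^ n) {r : ℝ} (hr0 : 0 ≤ r) (hr : r < ‖z‖) :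
    Summable fun n => ‖c n‖ * r ^ n := by
  have hz0 : 0 < ‖z‖ := hr0.trans_lt hr
  obtain ⟨C, hC⟩ : BddAbove (range fun n => ‖c n‖ * ‖z‖ ^ n) := by
    simpa using hz.tendsto_atTop_zero.norm.bddAbove_range
  refine .of_nonneg_of_le (fun n => by positivity) (fun n => ?_)
    ((summable_geometric_of_lt_one (by positivity) ((div_lt_one hz0).2 hr)).mul_left C)
  calc ‖c n‖ * r ^ n = ‖c n‖ * ‖z‖ ^ n * (r / ‖z‖) ^ n := by
        rw [div_pow, mul_assoc, mul_div_cancel₀ _ (by positivity)]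
    _ ≤ C * (r / ‖z‖) ^ n := by gcongr; exact hC ⟨n, rfl⟩

section PowerSeriesOnCircle

variable {c : ℕ → ℂ} {f : ℂ → ℂ} {R r : ℝ}

theorem summable_norm_mul_pow_of_hasSum_on_ball
    (hf : ∀ z ∈ ball (0 : ℂ) R, HasSum (fun n => c n * z ^ n) (f z)) (hr0 : 0 ≤ r)
    (hr : r < R) :
    Summable fun n => ‖c n‖ * r ^ n := by
  obtain ⟨s, hrs, hsR⟩ := exists_between hr
  have hs : ((s : ℝ) : ℂ) ∈ ball (0 : ℂ) R := by
    simpa [abs_of_pos (hr0.trans_lt hrs)] using hsR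
  exact summable_norm_mul_pow_of_summable (hf _ hs).summable hr0
    (by simpa [abs_of_pos (hr0.trans_lt hrs)] using hrs)

theorem circleMap_mem_ball_of_lt (hr0 : 0 ≤ r) (hr : r < R) (θ : ℝ) :
    circleMap 0 r θ ∈ ball (0 : ℂ) R :=
  closedBall_subset_ball hr (circleMap_mem_closedBall 0 hr0 θ)

variable (hf : ∀ z ∈ ball (0 : ℂ) R, HasSum (fun n => c n * z ^ n) (f z)) (hr0 : 0 ≤ r)
  (hr : r < R)
include hf hr0 hr

theorem continuous_comp_circleMap : Continuous fun θ => f (circleMap 0 r θ) := by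
  have hsum : (fun θ => f (circleMap 0 r θ)) = fun θ => ∑' n, c n * circleMap 0 r θ ^ n :=
    funext fun θ => ((hf _ (circleMap_mem_ball_of_lt hr0 hr θ)).tsum_eq).symm
  rw [hsum]
  refine continuous_tsum (fun n => by fun_prop) (summable_norm_mul_pow_of_hasSum_on_ball hf hr0 hr)
    fun n θ => ?_
  simp [abs_of_nonneg hr0]

theorem hasSum_integral_circleMap_mul_exp (k : ℤ) :
    HasSum (fun n : ℕ => if (n : ℤ) + k = 0 then ((2 * π : ℝ) : ℂ) * (c n * r ^ n) else 0)
      (∫ θ in (0 : ℝ)..2 * π, f (circleMap 0 r θ) * exp (k * θ * I)) := by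
  have hterm : ∀ n : ℕ, ∫ θ in (0 : ℝ)..2 * π, c n * circleMap 0 r θ ^ n * exp (k * θ * I) =
      if (n : ℤ) + k = 0 then ((2 * π : ℝ) : ℂ) * (c n * r ^ n) else 0 := by
    intro n
    have hexp : ∀ θ : ℝ, c n * circleMap 0 r θ ^ n * exp (k * θ * I) =
        c n * r ^ n * exp (((n + k : ℤ) : ℂ) * θ * I) := by
      intro θ
      rw [circleMap_zero, mul_pow, ← exp_nat_mul, mul_assoc, mul_assoc, ← exp_add]
      push_cast
      ring_nf
    simp_rw [hexp, intervalIntegral.integral_const_mul, integral_exp_int_mul_I]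
    split_ifs <;> ring
  have hdom := intervalIntegral.hasSum_integral_of_dominated_convergence
    (F := fun n θ => c n * circleMap 0 r θ ^ n * exp (k * θ * I))
    (f := fun θ => f (circleMap 0 r θ) * exp (k * θ * I)) (μ := volume) (a := 0) (b := 2 * π)
    (fun n _ => ‖c n‖ * r ^ n) (fun n => by fun_prop)
    (fun n => ae_of_all _ fun θ _ => by simp [abs_of_nonneg hr0, norm_exp])
    (ae_of_all _ fun _ _ => summable_norm_mul_pow_of_hasSum_on_ball hf hr0 hr)
    intervalIntegrable_const
    (ae_of_all _ fun θ _ => (hf _ (circleMap_mem_ball_of_lt hr0 hr θ)).mul_right _)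
  simpa only [hterm] using hdom

theorem integral_circleMap_mul_exp_neg (n : ℕ) :
    ∫ θ in (0 : ℝ)..2 * π, f (circleMap 0 r θ) * exp ((-n : ℤ) * θ * I) =
      2 * π * (c n * r ^ n) := by
  rw [← (hasSum_integral_circleMap_mul_exp hf hr0 hr (-n)).tsum_eq,
    tsum_eq_single n fun j hj => if_neg (by omega)]
  simp

theorem integral_circleMap_mul_exp_of_pos {m : ℕ} (hm : 0 < m) :
    ∫ θ in (0 : ℝ)..2 * π, f (circleMap 0 r θ) * exp ((m : ℤ) * θ * I) = 0 :=
  (hasSum_integral_circleMap_mul_exp hf hr0 hr m).unique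
    (by convert hasSum_zero with n; exact if_neg (by omega))

theorem integral_re_comp_circleMap :
    ∫ θ in (0 : ℝ)..2 * π, (f (circleMap 0 r θ)).re = 2 * π * (c 0).re := by
  have h0 := congrArg re (integral_circleMap_mul_exp_neg hf hr0 hr 0)
  simp only [CharP.cast_eq_zero, neg_zero, Int.cast_zero, zero_mul, exp_zero, mul_one,
    pow_zero] at h0
  rw [← reCLM_apply, ← reCLM.intervalIntegral_comp_comm
    ((continuous_comp_circleMap hf hr0 hr).intervalIntegrable _ _)] at h0
  simpa using h0

theorem integral_re_sub_mul_exp_neg (α : ℝ) {m : ℕ} (hm : 0 < m) :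
    ∫ θ in (0 : ℝ)..2 * π, (((f (circleMap 0 r θ)).re - α : ℝ) : ℂ) * exp ((-m : ℤ) * θ * I) =
      π * (c m * r ^ m) := by
  have hpt : ∀ θ : ℝ, (((f (circleMap 0 r θ)).re - α : ℝ) : ℂ) * exp ((-m : ℤ) * θ * I) =
      f (circleMap 0 r θ) * exp ((-m : ℤ) * θ * I) / 2 +
        conj (f (circleMap 0 r θ) * exp ((m : ℤ) * θ * I)) / 2 - α * exp ((-m : ℤ) * θ * I) := by
    intro θ
    rw [ofReal_sub, re_eq_add_conj, map_mul, ← exp_conj]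
    simp only [map_mul, conj_ofReal, conj_I, map_intCast]
    push_cast
    ring_nf
  have hcont := continuous_comp_circleMap hf hr0 hr
  have hneg : Continuous fun θ : ℝ => f (circleMap 0 r θ) * exp ((-m : ℤ) * θ * I) / 2 :=
    (hcont.mul (by fun_prop)).div_const 2
  have hpos : Continuous fun θ : ℝ => conj (f (circleMap 0 r θ) * exp ((m : ℤ) * θ * I)) / 2 :=
    (continuous_conj.comp (hcont.mul (by fun_prop))).div_const 2
  have hsum : Continuous fun θ : ℝ => f (circleMap 0 r θ) * exp ((-m : ℤ) * θ * I) / 2 +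
      conj (f (circleMap 0 r θ) * exp ((m : ℤ) * θ * I)) / 2 := hneg.add hpos
  rw [intervalIntegral.integral_congr fun θ _ => hpt θ,
    intervalIntegral.integral_sub (hsum.intervalIntegrable _ _)
      (by apply Continuous.intervalIntegrable; fun_prop),
    intervalIntegral.integral_add (hneg.intervalIntegrable _ _) (hpos.intervalIntegrable _ _),
    intervalIntegral.integral_div, intervalIntegral.integral_div,
    intervalIntegral.intervalIntegral_conj, intervalIntegral.integral_const_mul,
    integral_circleMap_mul_exp_neg hf hr0 hr, integral_circleMap_mul_exp_of_pos hf hr0 hr hm,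
    integral_exp_int_mul_I, if_neg (by omega), map_zero]
  ring

end PowerSeriesOnCircle

theorem integral_max_cos_sub_cos_zero {s : ℝ} (hs0 : 0 ≤ s) (hsπ : s ≤ π) :
    ∫ t in (0 : ℝ)..2 * π, max (Real.cos t - Real.cos s) 0 = 2 * (Real.sin s - s * Real.cos s) := by
  set g : ℝ → ℝ := fun t => max (Real.cos t - Real.cos s) 0 
  have hint : ∀ a b, IntervalIntegrable g volume a b := fun a b =>
    (Continuous.intervalIntegrable (by fun_prop) a b)
  have hper : Function.Periodic g (2 * π) := fun t => by simp [g, Real.cos_add_two_pi]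
  have hinner : ∀ t ∈ uIcc (-s) s, g t = Real.cos t - Real.cos s := fun t ht => by
    rw [uIcc_of_le (by linarith)] at ht
    refine max_eq_left (sub_nonneg.2 ?_)
    rw [← Real.cos_abs t]
    exact Real.cos_le_cos_of_nonneg_of_le_pi (abs_nonneg t) hsπ (abs_le.2 ht)
  have houter : ∀ t, s ≤ |t| → |t| ≤ π → g t = 0 := fun t h1 h2 => by
    refine max_eq_right (sub_nonpos.2 ?_)
    rw [← Real.cos_abs t]
    exact Real.cos_le_cos_of_nonneg_of_le_pi hs0 h2 h1
  have hleft : ∫ t in -π..-s, g t = 0 := by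
    refine (intervalIntegral.integral_congr fun t ht => ?_).trans intervalIntegral.integral_zero
    rw [uIcc_of_le (by linarith)] at ht
    exact houter t (by rw [abs_of_nonpos (by linarith [ht.2])]; linarith [ht.2])
      (abs_le.2 ⟨ht.1, by linarith [ht.2]⟩)
  have hright : ∫ t in s..π, g t = 0 := by
    refine (intervalIntegral.integral_congr fun t ht => ?_).trans intervalIntegral.integral_zero
    rw [uIcc_of_le hsπ] at ht
    exact houter t (by rw [abs_of_nonneg (by linarith [ht.1])]; exact ht.1)
      (abs_le.2 ⟨by linarith [ht.1], ht.2⟩)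
  calc ∫ t in (0 : ℝ)..2 * π, g t = ∫ t in -π..π, g t := by
        simpa [show -π + 2 * π = π by ring] using hper.intervalIntegral_add_eq 0 (-π)
    _ = (∫ t in -π..-s, g t) + (∫ t in -s..s, g t) + ∫ t in s..π, g t := by
        rw [intervalIntegral.integral_add_adjacent_intervals (hint _ _) (hint _ _),
          intervalIntegral.integral_add_adjacent_intervals (hint _ _) (hint _ _)]
    _ = ∫ t in -s..s, (Real.cos t - Real.cos s) := by
        rw [hleft, hright, zero_add, add_zero, intervalIntegral.integral_congr hinner]
    _ = 2 * (Real.sin s - s * Real.cos s) := by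
        rw [intervalIntegral.integral_sub (Real.continuous_cos.intervalIntegrable _ _)
          intervalIntegrable_const, integral_cos]
        simp only [Real.sin_neg, intervalIntegral.integral_const, smul_eq_mul]
        ring

theorem Function.Periodic.intervalIntegral_comp_mul_add {E : Type*} [NormedAddCommGroup E]
    [NormedSpace ℝ E] {g : ℝ → E} {T : ℝ} (hg : Function.Periodic g T) (hgc : Continuous g)
    {m : ℕ} (hm : 0 < m) (φ : ℝ) :
    ∫ θ in (0 : ℝ)..T, g (m * θ + φ) = ∫ t in (0 : ℝ)..T, g t := by
  have hm0 : (m : ℝ) ≠ 0 := by positivity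
  rw [intervalIntegral.integral_comp_mul_add g hm0, mul_zero, zero_add,
    show (m : ℝ) * T + φ = φ + (m : ℤ) • T by push_cast [zsmul_eq_mul]; ring,
    hg.intervalIntegral_add_zsmul_eq _ _ fun _ _ => hgc.intervalIntegrable _ _,
    hg.intervalIntegral_add_eq φ 0, zero_add, natCast_zsmul, ← Nat.cast_smul_eq_nsmul ℝ,
    inv_smul_smul₀ hm0]

section Bathtub

variable {u : ℝ → ℝ} {M a : ℝ}

theorem integral_mul_cos_le (hu : Continuous u) (hM : 0 < M) (hu0 : ∀ θ, 0 ≤ u θ)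
    (huM : ∀ θ, u θ ≤ M) (hmean : ∫ θ in (0 : ℝ)..2 * π, u θ = 2 * π * a) {m : ℕ} (hm : 0 < m)
    (φ : ℝ) :
    ∫ θ in (0 : ℝ)..2 * π, u θ * Real.cos (m * θ + φ) ≤ 2 * M * Real.sin (π * a / M) := by
  have h2π : (0 : ℝ) ≤ 2 * π := by positivity
  have ha0 : 0 ≤ a := by
    have := intervalIntegral.integral_nonneg (μ := volume) h2π fun θ _ => hu0 θ
    rw [hmean] at this
    exact nonneg_of_mul_nonneg_right this (by positivity)
  have haM : a ≤ M := by
    have := intervalIntegral.integral_mono_on (μ := volume) h2π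
      (hu.intervalIntegrable _ _) intervalIntegrable_const fun θ _ => huM θ
    rw [hmean, intervalIntegral.integral_const, smul_eq_mul, sub_zero] at this
    exact le_of_mul_le_mul_left this (by positivity)
  set s := π * a / M with hs
  have hs0 : 0 ≤ s := by positivity
  have hsπ : s ≤ π := by rw [hs, div_le_iff₀ hM]; gcongr
  set g : ℝ → ℝ := fun t => max (Real.cos t - Real.cos s) 0 with hg
  have hgc : Continuous g := by fun_prop
  -- The extremal `u` is `M` times the indicator of `{cos (m θ + φ) ≥ cos s}`.
  have hpt : ∀ θ, u θ * Real.cos (m * θ + φ) ≤ M * g (m * θ + φ) + Real.cos s * u θ := by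
    intro θ
    rcases le_total (Real.cos s) (Real.cos (m * θ + φ)) with h | h
    · rw [show g (m * θ + φ) = _ from max_eq_left (sub_nonneg.2 h)]
      nlinarith [hu0 θ, huM θ]
    · rw [show g (m * θ + φ) = _ from max_eq_right (sub_nonpos.2 h)]
      nlinarith [hu0 θ]
  calc ∫ θ in (0 : ℝ)..2 * π, u θ * Real.cos (m * θ + φ)
      ≤ ∫ θ in (0 : ℝ)..2 * π, (M * g (m * θ + φ) + Real.cos s * u θ) :=
        intervalIntegral.integral_mono_on h2π (Continuous.intervalIntegrable (by fun_prop) _ _)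
          (Continuous.intervalIntegrable (by fun_prop) _ _) fun θ _ => hpt θ
    _ = M * (2 * (Real.sin s - s * Real.cos s)) + Real.cos s * (2 * π * a) := by
        rw [intervalIntegral.integral_add (Continuous.intervalIntegrable (by fun_prop) _ _)
            (Continuous.intervalIntegrable (by fun_prop) _ _),
          intervalIntegral.integral_const_mul, intervalIntegral.integral_const_mul, hmean,
          (show Function.Periodic g (2 * π) from fun t => by simp [hg, Real.cos_add_two_pi])
            |>.intervalIntegral_comp_mul_add hgc hm φ,
          integral_max_cos_sub_cos_zero hs0 hsπ]
    _ = 2 * M * Real.sin s := by rw [hs]; field_simp; ring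

theorem norm_integral_mul_exp_le (hu : Continuous u) (hM : 0 < M) (hu0 : ∀ θ, 0 ≤ u θ)
    (huM : ∀ θ, u θ ≤ M) (hmean : ∫ θ in (0 : ℝ)..2 * π, u θ = 2 * π * a) {m : ℕ} (hm : 0 < m) :
    ‖∫ θ in (0 : ℝ)..2 * π, (u θ : ℂ) * exp ((-m : ℤ) * θ * I)‖ ≤ 2 * M * Real.sin (π * a / M) := by
  set Z := ∫ θ in (0 : ℝ)..2 * π, (u θ : ℂ) * exp ((-m : ℤ) * θ * I)
  have hrot : (‖Z‖ : ℂ) =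
      ∫ θ in (0 : ℝ)..2 * π, (u θ : ℂ) * exp (-(m * θ + arg Z : ℝ) * I) := by
    rw [← mul_one (‖Z‖ : ℂ), ← exp_zero, show (0 : ℂ) = arg Z * I + -(arg Z * I) by ring,
      exp_add, ← mul_assoc, norm_mul_exp_arg_mul_I, ← intervalIntegral.integral_mul_const]
    refine intervalIntegral.integral_congr fun θ _ => ?_
    rw [mul_assoc, ← exp_add]
    push_cast
    ring_nf
  have hre := congrArg re hrot
  rw [ofReal_re, ← reCLM_apply, ← reCLM.intervalIntegral_comp_comm
    (Continuous.intervalIntegrable (by fun_prop) _ _)] at hre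
  simp only [reCLM_apply, re_ofReal_mul, ← ofReal_neg, exp_ofReal_mul_I_re, Real.cos_neg] at hre
  exact hre ▸ integral_mul_cos_le hu hM hu0 huM hmean hm (arg Z)

end Bathtub

theorem le_of_forall_mul_pow_le {x B : ℝ} (m : ℕ) (h : ∀ r ∈ Ioo (0 : ℝ) 1, x * r ^ m ≤ B) :
    x ≤ B := by
  have hlim : Tendsto (fun r : ℝ => x * r ^ m) (𝓝[<] 1) (𝓝 x) := by
    simpa using ((continuous_pow m).const_mul x |>.tendsto 1).mono_left nhdsWithin_le_nhds
  exact le_of_tendsto hlim (eventually_of_mem (Ioo_mem_nhdsLT zero_lt_one) h)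

theorem stmt_12 (α β : ℝ) (hα : α < 1) (hβ : 1 < β) (p : ℂ → ℂ) (c : ℕ → ℂ)
    (hps : ∀ z ∈ ball (0 : ℂ) 1, HasSum (fun m : ℕ => c m * z ^ m) (p z))
    (hc0 : c 0 = 1)
    (hstrip : ∀ z ∈ ball (0 : ℂ) 1, α < (p z).re ∧ (p z).re < β) :
    ∀ m : ℕ, 1 ≤ m →
      ‖c m‖ ≤ (2 * (β - α) / Real.pi) * Real.sin (Real.pi * (1 - α) / (β - α)) := by
  intro m hm
  refine le_of_forall_mul_pow_le m fun r ⟨hr0, hr1⟩ => ?_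
  have hstrip_r θ := hstrip _ (circleMap_mem_ball_of_lt hr0.le hr1 θ)
  have hre : Continuous fun θ => (p (circleMap 0 r θ)).re :=
    continuous_re.comp (continuous_comp_circleMap hps hr0.le hr1)
  have hmean : ∫ θ in (0 : ℝ)..2 * π, ((p (circleMap 0 r θ)).re - α) = 2 * π * (1 - α) := by
    rw [intervalIntegral.integral_sub (hre.intervalIntegrable _ _) intervalIntegrable_const,
      integral_re_comp_circleMap hps hr0.le hr1, hc0, intervalIntegral.integral_const]
    simp only [one_re, sub_zero, smul_eq_mul]
    ring
  have hbound := norm_integral_mul_exp_le (u := fun θ => (p (circleMap 0 r θ)).re - α)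
    (hre.sub continuous_const) (sub_pos.2 (hα.trans hβ))
    (fun θ => sub_nonneg.2 (hstrip_r θ).1.le) (fun θ => sub_le_sub_right (hstrip_r θ).2.le α)
    hmean hm
  rw [integral_re_sub_mul_exp_neg hps hr0.le hr1 α hm, norm_mul, norm_mul, norm_pow, norm_real,
    norm_real, Real.norm_of_nonneg Real.pi_pos.le, Real.norm_of_nonneg hr0.le] at hbound
  rw [div_mul_eq_mul_div, le_div_iff₀ Real.pi_pos]
  linarith
end

section
/- Let 0 ≤ α < 1 and ρ > -1. Suppose φ(z) = z + Σ φ_n z^n satisfies |φ_n| ≤ n(1-α) + α for all n ≥ 2, and f(z) = z + Σ a_n z^n satisfies z² f'' + 2(1+ρ) z f' + ρ(1+ρ) f = (1+ρ)(2+ρ) φ on the unit disk. Then |a_n| ≤ [n(1-α) + α] · ((1+ρ)(2+ρ))/((n+ρ)(n+1+ρ)) for every n ≥ 2. -/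
/-!
With `θ = z d/dz`, the operator `z²f'' + 2(1+ρ)zf' + ρ(1+ρ)f` is `(θ + ρ)(θ + 1 + ρ)f`, so it
multiplies the `n`-th Taylor coefficient of `f` by `(n+ρ)(n+1+ρ)`. Uniqueness of power series
coefficients turns the differential equation into `(n+ρ)(n+1+ρ) aₙ = (1+ρ)(2+ρ) φₙ`, and for
`n ≥ 2` both factors on the left are positive, so the bound on `φₙ` passes to `aₙ`.
-/

open Metric FormalMultilinearSeries
open scoped ENNReal

section CauchyEuler

variable {𝕜 : Type*} [RCLike 𝕜] {g : 𝕜 → 𝕜} {c : ℕ → 𝕜} {r : ℝ≥0∞}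

theorem hasFPowerSeriesOnBall_ofScalars_of_hasSum (hr : 0 < r)
    (h : ∀ z ∈ eball (0 : 𝕜) r, HasSum (fun n => c n * z ^ n) (g z)) :
    HasFPowerSeriesOnBall g (ofScalars 𝕜 c) 0 r := by
  refine ⟨ENNReal.le_of_forall_nnreal_lt fun t ht => ?_, hr, fun {z} hz => ?_⟩
  · have ht' : ((t : ℝ) : 𝕜) ∈ eball (0 : 𝕜) r := by
      rwa [Metric.mem_eball, edist_zero_right, ← ofReal_norm, RCLike.norm_ofReal, NNReal.abs_eq,
        ENNReal.ofReal_coe_nnreal]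
    refine (ofScalars 𝕜 c).le_radius_of_tendsto (l := 0) ?_
    simpa [ofScalars_norm] using (h _ ht').summable.tendsto_atTop_zero.norm
  · simpa [ofScalars_apply_eq, mul_comm] using h z hz

theorem HasFPowerSeriesOnBall.hasFPowerSeriesOnBall_mul_deriv
    (h : HasFPowerSeriesOnBall g (ofScalars 𝕜 c) 0 r) :
    HasFPowerSeriesOnBall (fun z => z * deriv g z) (ofScalars 𝕜 fun n => n * c n) 0 r := by
  refine hasFPowerSeriesOnBall_ofScalars_of_hasSum h.r_pos fun z hz => ?_
  have hs := (ContinuousLinearMap.apply 𝕜 𝕜 z).hasSum (h.fderiv.hasSum hz)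
  have hval : fderiv 𝕜 g z z = z * deriv g z := by
    rw [← fderiv_apply_one_eq_deriv, ← smul_eq_mul, ← map_smul, smul_eq_mul, mul_one]
  simp only [zero_add, ContinuousLinearMap.apply_apply, derivSeries_apply_diag,
    ofScalars_apply_eq, hval] at hs
  refine (hasSum_nat_add_iff' 1).mp ?_
  simpa [nsmul_eq_mul, pow_succ, mul_assoc, mul_comm, mul_left_comm] using hs

theorem HasFPowerSeriesOnBall.hasSum_ofScalars (h : HasFPowerSeriesOnBall g (ofScalars 𝕜 c) 0 r)
    {z : 𝕜} (hz : z ∈ eball (0 : 𝕜) r) : HasSum (fun n => c n * z ^ n) (g z) := by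
  simpa [ofScalars_apply_eq, mul_comm] using h.hasSum hz

theorem HasFPowerSeriesOnBall.hasSum_cauchyEuler (h : HasFPowerSeriesOnBall g (ofScalars 𝕜 c) 0 r)
    (p q : 𝕜) {z : 𝕜} (hz : z ∈ eball (0 : 𝕜) r) :
    HasSum (fun n : ℕ => ((n : 𝕜) * (n - 1) + p * n + q) * c n * z ^ n)
      (z ^ 2 * deriv (deriv g) z + p * z * deriv g z + q * g z) := by
  have h₁ := h.hasFPowerSeriesOnBall_mul_deriv
  have h₂ := h₁.hasFPowerSeriesOnBall_mul_deriv
  have hderiv : deriv (fun w => w * deriv g w) z = deriv g z + z * deriv (deriv g) z := by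
    have hg' : DifferentiableAt 𝕜 (deriv g) z := (h.analyticOnNhd.deriv z hz).differentiableAt
    simp [deriv_fun_mul differentiableAt_fun_id hg']
  have hs := ((h₂.hasSum_ofScalars hz).sub (h₁.hasSum_ofScalars hz)).add
    (((h₁.hasSum_ofScalars hz).mul_left p).add ((h.hasSum_ofScalars hz).mul_left q))
  have hθθ : z ^ 2 * deriv (deriv g) z + p * z * deriv g z + q * g z =
      z * deriv (fun w => w * deriv g w) z - z * deriv g z + (p * (z * deriv g z) + q * g z) := by
    rw [hderiv]; ring
  rw [hθθ]
  exact hs.congr_fun fun n => by ring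

theorem eq_of_hasSum_mul_pow (hr : 0 < r) {b : ℕ → 𝕜}
    (hb : ∀ z ∈ eball (0 : 𝕜) r, HasSum (fun n => b n * z ^ n) (g z))
    (hc : ∀ z ∈ eball (0 : 𝕜) r, HasSum (fun n => c n * z ^ n) (g z)) : b = c :=
  ofScalars_series_injective 𝕜 𝕜 <|
    (hasFPowerSeriesOnBall_ofScalars_of_hasSum hr hb).hasFPowerSeriesAt.eq_formalMultilinearSeries
      (hasFPowerSeriesOnBall_ofScalars_of_hasSum hr hc).hasFPowerSeriesAt

end CauchyEuler

theorem RCLike.norm_le_of_ofReal_mul_eq {𝕜 : Type*} [RCLike 𝕜] {a b : 𝕜} {s t M : ℝ}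
    (hs : 0 < s) (ht : 0 ≤ t) (hab : (s : 𝕜) * a = t * b) (hb : ‖b‖ ≤ M) :
    ‖a‖ ≤ M * t / s := by
  have hnorm : s * ‖a‖ = t * ‖b‖ := by
    simpa [norm_mul, abs_of_pos hs, abs_of_nonneg ht] using congrArg norm hab
  rw [le_div_iff₀ hs]
  nlinarith

theorem stmt_15_general (α ρ : ℝ) (hρ : -1 < ρ)
    (φ f : ℂ → ℂ) (φn a : ℕ → ℂ)
    (hφs : ∀ z ∈ ball (0 : ℂ) 1, HasSum (fun n : ℕ => φn n * z ^ n) (φ z))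
    (hφb : ∀ n : ℕ, 2 ≤ n → ‖φn n‖ ≤ n * (1 - α) + α)
    (hfs : ∀ z ∈ ball (0 : ℂ) 1, HasSum (fun n : ℕ => a n * z ^ n) (f z))
    (hode : ∀ z ∈ ball (0 : ℂ) 1,
      z ^ 2 * deriv (deriv f) z + 2 * (1 + (ρ : ℂ)) * z * deriv f z + (ρ : ℂ) * (1 + ρ) * f z =
        (1 + (ρ : ℂ)) * (2 + ρ) * φ z) :
    ∀ n : ℕ, 2 ≤ n → ‖a n‖ ≤
      ((n : ℝ) * (1 - α) + α) * ((1 + ρ) * (2 + ρ)) / (((n : ℝ) + ρ) * ((n : ℝ) + 1 + ρ)) := by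
  have hball : eball (0 : ℂ) 1 = ball 0 1 := by simpa using eball_coe (x := (0 : ℂ)) (ε := 1)
  rw [← hball] at hφs hfs hode
  have hf := hasFPowerSeriesOnBall_ofScalars_of_hasSum one_pos hfs
  have hcoeff : (fun n : ℕ => ((n : ℂ) + ρ) * (n + 1 + ρ) * a n) =
      fun n => (1 + ρ) * (2 + ρ) * φn n := by
    refine eq_of_hasSum_mul_pow (g := fun z => (1 + ρ) * (2 + ρ) * φ z) one_pos
      (fun z hz => ?_) (fun z hz => ?_)
    · rw [← hode z hz]
      exact (hf.hasSum_cauchyEuler _ _ hz).congr_fun fun n => by ring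
    · simpa only [mul_assoc] using (hφs z hz).mul_left ((1 + ρ : ℂ) * (2 + ρ))
  intro n hn
  have hn' : (2 : ℝ) ≤ n := by exact_mod_cast hn
  refine RCLike.norm_le_of_ofReal_mul_eq (by nlinarith) (by nlinarith) ?_ (hφb n hn)
  push_cast
  exact congrFun hcoeff n

theorem stmt_15 (α ρ : ℝ) (hα : 0 ≤ α) (hα1 : α < 1) (hρ : -1 < ρ)
    (φ f : ℂ → ℂ) (φn a : ℕ → ℂ)
    (hφs : ∀ z ∈ ball (0 : ℂ) 1, HasSum (fun n : ℕ => φn n * z ^ n) (φ z))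
    (hφ0 : φn 0 = 0) (hφ1 : φn 1 = 1)
    (hφb : ∀ n : ℕ, 2 ≤ n → ‖φn n‖ ≤ n * (1 - α) + α)
    (hfs : ∀ z ∈ ball (0 : ℂ) 1, HasSum (fun n : ℕ => a n * z ^ n) (f z))
    (ha0 : a 0 = 0) (ha1 : a 1 = 1)
    (hode : ∀ z ∈ ball (0 : ℂ) 1,
      z ^ 2 * deriv (deriv f) z + 2 * (1 + (ρ : ℂ)) * z * deriv f z + (ρ : ℂ) * (1 + ρ) * f z =
        (1 + (ρ : ℂ)) * (2 + ρ) * φ z) :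
    ∀ n : ℕ, 2 ≤ n → ‖a n‖ ≤
      ((n : ℝ) * (1 - α) + α) * ((1 + ρ) * (2 + ρ)) / (((n : ℝ) + ρ) * ((n : ℝ) + 1 + ρ)) :=
  stmt_15_general α ρ hρ φ f φn a hφs hφb hfs hode
end
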